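/- Correctness of the gradient descent output (Lemma 1.2): assume 0 < ε ≤ 1/2, α ≥ 1, β > 0, and let b, π ∈ ℝⁿ satisfy bᵀπ = 1 and φ_β(π) ≥ 4·ln(4m)/(ε·β). Let P = I − πbᵀ and b̃ = Pᵀ∇φ_β(π). Let h̃ ∈ ℝⁿ satisfy ‖W₋⁻¹Aᵀh̃‖_∞ ≤ 1 and ‖R★AᵀPh̃‖_∞ > 0, and suppose δ := b̃ᵀh̃ / ‖R★AᵀPh̃‖_∞ ≤ ε/(8·α·λ²). Let x₁ ∈ ℝᵐ satisfy Ax₁ = ∇φ_β(π) and p(W★x₁) ≤ 1 + ε/8, and let x₂ ∈ ℝᵐ satisfy Ax₂ = b̃ and ‖W₋x₂‖₁ ≤ α·b̃ᵀh̃. Then x := (x₁ − x₂)/(πᵀ∇φ_β(π)) and y := π / q(R★Aᵀπ) are well defined and satisfy Ax = b, q(R★Aᵀy) ≤ 1, and p(W★x) ≤ (1 + ε)·bᵀy. -/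

import Mathlib

open Matrix BigOperators

/-- Asymmetric "norm" `p(v) = Σᵢ max(0, vᵢ)`. -/
noncomputable def pnorm {d : Type*} [Fintype d] (v : d → ℝ) : ℝ := ∑ i, max (v i) 0

/-- Asymmetric "norm" `q(v) = max(0, maxᵢ vᵢ)`. -/
noncomputable def qnorm {d : Type*} [Fintype d] (v : d → ℝ) : ℝ :=
  Finset.univ.fold max 0 v

/-- ∞-norm `‖v‖_∞ = maxᵢ |vᵢ|` (as `max(0, maxᵢ |vᵢ|)`, which agrees with it). -/
noncomputable def infnorm {d : Type*} [Fintype d] (v : d → ℝ) : ℝ :=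
  Finset.univ.fold max 0 (fun i => |v i|)

/-- 1-norm `‖v‖₁ = Σᵢ |vᵢ|`. -/
noncomputable def onenorm {d : Type*} [Fintype d] (v : d → ℝ) : ℝ := ∑ i, |v i|

/-- `W★ : ℝᵐ → ℝ²ᵐ`, sending `x` to `(W₊x, −W₋x)`. -/
noncomputable def Wstar {m : ℕ} (wp wm : Fin m → ℝ) (x : Fin m → ℝ) : Fin m ⊕ Fin m → ℝ :=
  Sum.elim (fun e => wp e * x e) (fun e => -(wm e * x e))

/-- `R★ : ℝᵐ → ℝ²ᵐ`, sending `x` to `(W₊⁻¹x, −W₋⁻¹x)`. -/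
noncomputable def Rstar {m : ℕ} (wp wm : Fin m → ℝ) (x : Fin m → ℝ) : Fin m ⊕ Fin m → ℝ :=
  Sum.elim (fun e => x e / wp e) (fun e => -(x e / wm e))

/-- The transpose `R★ᵀ : ℝ²ᵐ → ℝᵐ`. -/
noncomputable def RstarT {m : ℕ} (wp wm : Fin m → ℝ) (g : Fin m ⊕ Fin m → ℝ) : Fin m → ℝ :=
  fun e => g (Sum.inl e) / wp e - g (Sum.inr e) / wm e

/-- Soft-max `lse_β(v) = (1/β)·ln(Σᵢ e^{β·vᵢ})`. -/
noncomputable def lse {d : Type*} [Fintype d] (β : ℝ) (v : d → ℝ) : ℝ :=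
  (1 / β) * Real.log (∑ i, Real.exp (β * v i))

/-- Gradient of the soft-max: `∇lse_β(v)ᵢ = e^{β·vᵢ}/Σⱼ e^{β·vⱼ}`. -/
noncomputable def gradLse {d : Type*} [Fintype d] (β : ℝ) (v : d → ℝ) : d → ℝ :=
  fun i => Real.exp (β * v i) / ∑ j, Real.exp (β * v j)

/-- Potential `φ_β(π) = lse_β(R★Aᵀπ)`. -/
noncomputable def pot {n m : ℕ} (A : Matrix (Fin n) (Fin m) ℝ) (wp wm : Fin m → ℝ)
    (β : ℝ) (π : Fin n → ℝ) : ℝ :=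
  lse β (Rstar wp wm (Aᵀ *ᵥ π))

/-- Gradient of the potential: `∇φ_β(π) = A·R★ᵀ·∇lse_β(R★Aᵀπ)`. -/
noncomputable def gradPot {n m : ℕ} (A : Matrix (Fin n) (Fin m) ℝ) (wp wm : Fin m → ℝ)
    (β : ℝ) (π : Fin n → ℝ) : Fin n → ℝ :=
  A *ᵥ RstarT wp wm (gradLse β (Rstar wp wm (Aᵀ *ᵥ π)))

/-!
Write `v = R★Aᵀπ`, `g = ∇lse_β(v)`, `G = πᵀ∇φ_β(π) = ⟨g, v⟩` and `Q = q(v)`. Since `g` is a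
probability vector, comparing `lse_β` with the maximum and with the entropy of `g` gives
`Q ≤ φ_β(π) ≤ min(Q, G) + ln(2m)/β`, and the lower bound on `φ_β(π)` makes the error `ln(2m)/β` at
most `ε φ_β(π)/4`. Hence `Q > 0` and `(1 - ε/4) Q ≤ G`; then `Ax = b` and `q(R★Aᵀy) ≤ 1` are
immediate.

For the last claim, `p(W★x) ≤ (p(W★x₁) + λ‖W₋x₂‖₁)/G ≤ (1 + ε/8 + λα b̃ᵀh̃)/G`. Writing
`b̃ᵀh̃ = ⟨g, R★Aᵀh̃⟩ - (bᵀh̃) G` bounds `|bᵀh̃| G ≤ 1 + b̃ᵀh̃`, so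
`‖R★AᵀPh̃‖_∞ ≤ 1 + (8/7) λ (1 + b̃ᵀh̃)`; as `b̃ᵀh̃ = δ ‖R★AᵀPh̃‖_∞` with `δ` small, this
self-referential bound yields `λα b̃ᵀh̃ ≤ 7ε/24`, and `1 + 5ε/12 ≤ (1 + ε)(1 - ε/4)` concludes.
-/

section Norms

variable {d : Type*} [Fintype d]

lemma qnorm_le {v : d → ℝ} {c : ℝ} (hc : 0 ≤ c) (h : ∀ i, v i ≤ c) : qnorm v ≤ c :=
  (Finset.fold_max_le c).2 ⟨hc, fun i _ => h i⟩

lemma le_qnorm (v : d → ℝ) (i : d) : v i ≤ qnorm v :=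
  (Finset.le_fold_max _).2 (Or.inr ⟨i, Finset.mem_univ i, le_rfl⟩)

lemma qnorm_nonneg (v : d → ℝ) : 0 ≤ qnorm v :=
  (Finset.le_fold_max _).2 (Or.inl le_rfl)

lemma qnorm_inv_qnorm_smul_le_one (v : d → ℝ) : qnorm ((qnorm v)⁻¹ • v) ≤ 1 :=
  qnorm_le zero_le_one fun i => inv_mul_le_one_of_le₀ (le_qnorm v i) (qnorm_nonneg v)

lemma abs_le_infnorm (v : d → ℝ) (i : d) : |v i| ≤ infnorm v :=
  (Finset.le_fold_max _).2 (Or.inr ⟨i, Finset.mem_univ i, le_rfl⟩)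

lemma infnorm_le {v : d → ℝ} {c : ℝ} (hc : 0 ≤ c) (h : ∀ i, |v i| ≤ c) : infnorm v ≤ c :=
  (Finset.fold_max_le c).2 ⟨hc, fun i _ => h i⟩

lemma onenorm_nonneg (v : d → ℝ) : 0 ≤ onenorm v :=
  Finset.sum_nonneg fun i _ => abs_nonneg (v i)

lemma pnorm_add_le (u v : d → ℝ) : pnorm (u + v) ≤ pnorm u + pnorm v := by
  rw [pnorm, pnorm, pnorm, ← Finset.sum_add_distrib]
  exact Finset.sum_le_sum fun i _ =>
    max_le (add_le_add (le_max_left _ _) (le_max_left _ _)) (by positivity)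

lemma pnorm_smul {c : ℝ} (hc : 0 ≤ c) (v : d → ℝ) : pnorm (c • v) = c * pnorm v := by
  simp only [pnorm, Finset.mul_sum, Pi.smul_apply, smul_eq_mul, mul_max_of_nonneg _ _ hc,
    mul_zero]

end Norms

section SoftMax

variable {d : Type*} [Fintype d] {β : ℝ} (v : d → ℝ)

lemma lse_eq_log_div : lse β v = Real.log (∑ i, Real.exp (β * v i)) / β :=
  one_div_mul_eq_div _ _

variable {v} in
lemma le_lse (hβ : 0 < β) (i : d) : v i ≤ lse β v := by
  rw [lse_eq_log_div, le_div_iff₀ hβ, mul_comm, ← Real.log_exp (β * v i)]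
  exact Real.log_le_log (Real.exp_pos _) <| Finset.single_le_sum
    (f := fun j => Real.exp (β * v j)) (fun j _ => (Real.exp_pos _).le) (Finset.mem_univ i)

variable {v} in
lemma qnorm_le_lse (hβ : 0 < β) (h : 0 ≤ lse β v) : qnorm v ≤ lse β v :=
  qnorm_le h (le_lse hβ)

variable [Nonempty d]

lemma sum_exp_pos : 0 < ∑ i, Real.exp (β * v i) :=
  Finset.sum_pos (fun _ _ => Real.exp_pos _) Finset.univ_nonempty

lemma gradLse_pos (i : d) : 0 < gradLse β v i :=
  div_pos (Real.exp_pos _) (sum_exp_pos v)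

lemma sum_gradLse : ∑ i, gradLse β v i = 1 := by
  simp only [gradLse, ← Finset.sum_div]
  exact div_self (sum_exp_pos v).ne'

lemma abs_gradLse_dotProduct_le {u : d → ℝ} (hu : ∀ i, |u i| ≤ 1) :
    |gradLse β v ⬝ᵥ u| ≤ 1 :=
  calc |gradLse β v ⬝ᵥ u| ≤ ∑ i, gradLse β v i * |u i| := by
        refine (Finset.abs_sum_le_sum_abs _ _).trans_eq ?_
        simp only [abs_mul, abs_of_pos (gradLse_pos v _)]
    _ ≤ ∑ i, gradLse β v i :=
        Finset.sum_le_sum fun i _ => mul_le_of_le_one_right (gradLse_pos v i).le (hu i)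
    _ = 1 := sum_gradLse v

variable {v}

lemma lse_le_qnorm_add (hβ : 0 < β) :
    lse β v ≤ qnorm v + Real.log (Fintype.card d) / β := by
  have hsum : ∑ i, Real.exp (β * v i) ≤ Fintype.card d * Real.exp (β * qnorm v) := by
    simpa using Finset.sum_le_sum fun i (_ : i ∈ Finset.univ) =>
      Real.exp_le_exp.2 (mul_le_mul_of_nonneg_left (le_qnorm v i) hβ.le)
  have hlog := Real.log_le_log (sum_exp_pos v) hsum
  rw [Real.log_mul (by positivity) (Real.exp_pos _).ne', Real.log_exp] at hlog
  rw [lse_eq_log_div, div_le_iff₀ hβ, add_mul, div_mul_cancel₀ _ hβ.ne']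
  linarith

/-- Jensen's inequality for `log` with the weights `gradLse β v`: the entropy of the soft-max
distribution, `log (∑ exp (β vⱼ)) - β ⟪gradLse β v, v⟫`, is at most `log (card d)`. -/
lemma lse_le_gradLse_dotProduct_add (hβ : 0 < β) :
    lse β v ≤ gradLse β v ⬝ᵥ v + Real.log (Fintype.card d) / β := by
  set S := ∑ i, Real.exp (β * v i)
  have hg := gradLse_pos v (β := β)
  have hlog : ∀ i, Real.log (1 / gradLse β v i) = Real.log S - β * v i := fun i => by
    rw [one_div, Real.log_inv, gradLse, Real.log_div (Real.exp_pos _).ne' (sum_exp_pos v).ne',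
      Real.log_exp]
    ring
  have jensen := strictConcaveOn_log_Ioi.concaveOn.le_map_sum (t := Finset.univ)
    (p := fun i => 1 / gradLse β v i) (fun i _ => (hg i).le) (sum_gradLse v)
    (fun i _ => one_div_pos.2 (hg i))
  simp only [smul_eq_mul, hlog, mul_one_div_cancel (hg _).ne', Finset.sum_const,
    Finset.card_univ, nsmul_eq_mul, mul_one, mul_sub, Finset.sum_sub_distrib,
    ← Finset.sum_mul, sum_gradLse, one_mul] at jensen
  have hdot : ∑ i, gradLse β v i * (β * v i) = β * (gradLse β v ⬝ᵥ v) := by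
    simp only [dotProduct, Finset.mul_sum]
    exact Finset.sum_congr rfl fun i _ => by ring
  rw [lse_eq_log_div, div_le_iff₀ hβ, add_mul, div_mul_cancel₀ _ hβ.ne']
  linarith

end SoftMax

section Weights

variable {m : ℕ} {wp wm : Fin m → ℝ}

lemma Rstar_sub (u w : Fin m → ℝ) : Rstar wp wm (u - w) = Rstar wp wm u - Rstar wp wm w := by
  ext (e | e) <;> simp only [Rstar, Sum.elim_inl, Sum.elim_inr, Pi.sub_apply] <;> ring

lemma Rstar_smul (c : ℝ) (u : Fin m → ℝ) : Rstar wp wm (c • u) = c • Rstar wp wm u := by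
  ext (e | e) <;> simp only [Rstar, Sum.elim_inl, Sum.elim_inr, Pi.smul_apply, smul_eq_mul] <;>
    ring

lemma Wstar_sub (x y : Fin m → ℝ) : Wstar wp wm (x - y) = Wstar wp wm x - Wstar wp wm y := by
  ext (e | e) <;> simp only [Wstar, Sum.elim_inl, Sum.elim_inr, Pi.sub_apply] <;> ring

lemma Wstar_smul (c : ℝ) (x : Fin m → ℝ) : Wstar wp wm (c • x) = c • Wstar wp wm x := by
  ext (e | e) <;> simp only [Wstar, Sum.elim_inl, Sum.elim_inr, Pi.smul_apply, smul_eq_mul] <;>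
    ring

lemma dotProduct_RstarT (u : Fin m → ℝ) (g : Fin m ⊕ Fin m → ℝ) :
    u ⬝ᵥ RstarT wp wm g = g ⬝ᵥ Rstar wp wm u := by
  simp only [dotProduct, RstarT, Rstar, Fintype.sum_sum_type, Sum.elim_inl, Sum.elim_inr,
    ← Finset.sum_add_distrib]
  exact Finset.sum_congr rfl fun e _ => by ring

variable (hwm : ∀ e, 0 < wm e) (hwp : ∀ e, wm e ≤ wp e)
include hwm hwp

lemma abs_Rstar_le_one {u : Fin m → ℝ} (hu : ∀ e, |u e| ≤ wm e) (i : Fin m ⊕ Fin m) :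
    |Rstar wp wm u i| ≤ 1 := by
  rcases i with e | e <;> simp only [Rstar, Sum.elim_inl, Sum.elim_inr, abs_neg, abs_div]
  · rw [abs_of_pos ((hwm e).trans_le (hwp e)), div_le_one ((hwm e).trans_le (hwp e))]
    exact (hu e).trans (hwp e)
  · rw [abs_of_pos (hwm e), div_le_one (hwm e)]
    exact hu e

variable {lam : ℝ} (hlam : ∀ e, wp e / wm e ≤ lam)
include hlam

lemma abs_Rstar_le_mul_qnorm (u : Fin m → ℝ) (i : Fin m ⊕ Fin m) :
    |Rstar wp wm u i| ≤ lam * qnorm (Rstar wp wm u) := by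
  set Q := qnorm (Rstar wp wm u)
  have hQ : 0 ≤ Q := qnorm_nonneg _
  have hwm_le : ∀ e, |u e| / wm e ≤ lam * Q := fun e => by
    have hwpos := (hwm e).trans_le (hwp e)
    have hlam1 : 1 ≤ lam := ((one_le_div (hwm e)).2 (hwp e)).trans (hlam e)
    have hpos : u e / wp e ≤ Q := le_qnorm (Rstar wp wm u) (Sum.inl e)
    have hneg : -(u e / wm e) ≤ Q := le_qnorm (Rstar wp wm u) (Sum.inr e)
    rcases abs_cases (u e) with ⟨habs, hu⟩ | ⟨habs, hu⟩ <;> rw [habs]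
    · calc u e / wm e = u e / wp e * (wp e / wm e) := by field_simp [(hwm e).ne', hwpos.ne']
        _ ≤ Q * lam := mul_le_mul hpos (hlam e) (div_nonneg hwpos.le (hwm e).le) hQ
        _ = lam * Q := mul_comm _ _
    · rw [neg_div]
      exact hneg.trans (le_mul_of_one_le_left hQ hlam1)
  rcases i with e | e <;> simp only [Rstar, Sum.elim_inl, Sum.elim_inr, abs_neg, abs_div]
  · rw [abs_of_pos ((hwm e).trans_le (hwp e))]
    exact (div_le_div_of_nonneg_left (abs_nonneg _) (hwm e) (hwp e)).trans (hwm_le e)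
  · rw [abs_of_pos (hwm e)]
    exact hwm_le e

lemma infnorm_Rstar_sub_smul_le [Nonempty (Fin m)] {u w : Fin m → ℝ} (hu : ∀ e, |u e| ≤ wm e)
    (c : ℝ) : infnorm (Rstar wp wm (u - c • w)) ≤ 1 + |c| * (lam * qnorm (Rstar wp wm w)) := by
  have hcomp : ∀ i, |Rstar wp wm (u - c • w) i| ≤ 1 + |c| * (lam * qnorm (Rstar wp wm w)) := by
    intro i
    rw [Rstar_sub, Rstar_smul, Pi.sub_apply, Pi.smul_apply, smul_eq_mul]
    refine (abs_sub _ _).trans (add_le_add (abs_Rstar_le_one hwm hwp hu i) ?_)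
    rw [abs_mul]
    exact mul_le_mul_of_nonneg_left (abs_Rstar_le_mul_qnorm hwm hwp hlam w i) (abs_nonneg c)
  exact infnorm_le ((abs_nonneg _).trans (hcomp (Classical.arbitrary _))) hcomp

lemma pnorm_neg_Wstar_le (x : Fin m → ℝ) :
    pnorm (-Wstar wp wm x) ≤ lam * onenorm (fun e => wm e * x e) := by
  simp only [pnorm, onenorm, Fintype.sum_sum_type, Pi.neg_apply, Wstar, Sum.elim_inl,
    Sum.elim_inr, neg_neg, Finset.mul_sum, ← Finset.sum_add_distrib]
  refine Finset.sum_le_sum fun e _ => ?_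
  have hwp' : wp e ≤ lam * wm e := (div_le_iff₀ (hwm e)).1 (hlam e)
  have hlam1 : 1 ≤ lam := ((one_le_div (hwm e)).2 (hwp e)).trans (hlam e)
  rcases le_or_gt 0 (x e) with hx | hx
  · have hwx : 0 ≤ wm e * x e := mul_nonneg (hwm e).le hx
    rw [max_eq_right (neg_nonpos.2 (mul_nonneg ((hwm e).le.trans (hwp e)) hx)),
      max_eq_left hwx, abs_of_nonneg hwx]
    nlinarith
  · have hwx : wm e * x e < 0 := mul_neg_of_pos_of_neg (hwm e) hx
    rw [max_eq_left (neg_nonneg.2 (mul_nonpos_of_nonneg_of_nonpos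
        ((hwm e).le.trans (hwp e)) hx.le)), max_eq_right hwx.le, abs_of_neg hwx]
    nlinarith

lemma pnorm_Wstar_sub_le (x y : Fin m → ℝ) :
    pnorm (Wstar wp wm (x - y)) ≤ pnorm (Wstar wp wm x) + lam * onenorm (fun e => wm e * y e) := by
  rw [Wstar_sub, sub_eq_add_neg]
  exact (pnorm_add_le _ _).trans (add_le_add le_rfl (pnorm_neg_Wstar_le hwm hwp hlam y))

end Weights

/-- `t = δ N` occurs on both sides of the bound on `N`; since `δ λ ≤ 1/16` it can be absorbed,
giving `t ≤ 1/6` and then `N ≤ 7λ/3`. -/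
lemma mul_mul_le_of_self_referential_bound {lam α ε t N : ℝ} (hlam : 1 ≤ lam) (hα : 1 ≤ α)
    (hε : ε ≤ 1 / 2) (ht : 0 ≤ t) (hN : 0 < N) (hNt : N ≤ 1 + 8 / 7 * lam * (1 + t))
    (htN : t / N ≤ ε / (8 * α * lam ^ 2)) :
    lam * (α * t) ≤ 7 / 24 * ε := by
  set δ := t / N
  have hδ0 : 0 ≤ δ := div_nonneg ht hN.le
  have htδ : t = δ * N := (div_mul_cancel₀ t hN.ne').symm
  have hδε : δ * (8 * α * lam ^ 2) ≤ ε := (le_div_iff₀ (by positivity)).1 htN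
  have hδlam2 : δ * lam ^ 2 ≤ 1 / 16 := by
    nlinarith [mul_nonneg (mul_nonneg hδ0 (sq_nonneg lam)) (sub_nonneg.2 hα)]
  have hδlam : δ * lam ≤ 1 / 16 := by
    nlinarith [mul_nonneg (mul_nonneg hδ0 (zero_le_one.trans hlam)) (sub_nonneg.2 hlam)]
  have hδ : δ ≤ 1 / 16 := by nlinarith [mul_nonneg hδ0 (sub_nonneg.2 hlam)]
  have ht6 : t ≤ 1 / 6 := by
    nlinarith [mul_le_mul_of_nonneg_left hNt hδ0, mul_le_mul_of_nonneg_right hδlam ht]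
  have hN3 : N ≤ 7 / 3 * lam := by
    nlinarith [mul_le_mul_of_nonneg_left ht6 (zero_le_one.trans hlam)]
  have hε0 : 0 ≤ ε := le_trans (by positivity) hδε
  have h1 := mul_le_mul_of_nonneg_right hδε hN.le
  have h2 := mul_le_mul_of_nonneg_left hN3 hε0
  have h3 : lam * (8 * (lam * (α * t))) ≤ lam * (7 / 3 * ε) := by
    rw [htδ]; linarith
  linarith [le_of_mul_le_mul_left h3 (by linarith)]

lemma one_add_div_le_one_add_div {ε G Q : ℝ} (hε : 0 < ε) (hε' : ε ≤ 1 / 2) (hQ : 0 < Q)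
    (hQG : (1 - ε / 4) * Q ≤ G) : (1 + 5 / 12 * ε) / G ≤ (1 + ε) / Q := by
  have hG : 0 < G := (mul_pos (by linarith) hQ).trans_le hQG
  rw [div_le_div_iff₀ hG hQ]
  nlinarith [mul_le_mul_of_nonneg_left hQG (by linarith : 0 ≤ 1 + ε),
    mul_nonneg (mul_nonneg hε.le (by linarith : 0 ≤ 1 / 3 - ε / 4)) hQ.le]

section Potential

variable {n m : ℕ} (A : Matrix (Fin n) (Fin m) ℝ) (wp wm : Fin m → ℝ) {β : ℝ}

/-- `Pᵀ∇φ_β(π)` for the projection `P = I − πbᵀ`, the vector `b̃` of the paper. -/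
noncomputable def projGradPot (β : ℝ) (b π : Fin n → ℝ) : Fin n → ℝ :=
  gradPot A wp wm β π - (π ⬝ᵥ gradPot A wp wm β π) • b

lemma dotProduct_gradPot (π z : Fin n → ℝ) :
    z ⬝ᵥ gradPot A wp wm β π = gradLse β (Rstar wp wm (Aᵀ *ᵥ π)) ⬝ᵥ Rstar wp wm (Aᵀ *ᵥ z) := by
  rw [gradPot, dotProduct_mulVec, ← mulVec_transpose, dotProduct_RstarT]

lemma card_sum_fin : (Fintype.card (Fin m ⊕ Fin m) : ℝ) = 2 * m := by
  rw [Fintype.card_sum, Fintype.card_fin]; push_cast; ring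

variable {ε : ℝ} {π : Fin n → ℝ} (hm : 1 ≤ m) (hε : 0 < ε) (hβ : 0 < β)
  (hpot : 4 * Real.log (4 * (m : ℝ)) / (ε * β) ≤ pot A wp wm β π)
include hm hε hβ hpot

lemma pot_pos : 0 < pot A wp wm β π := by
  have : 0 < Real.log (4 * (m : ℝ)) := Real.log_pos (by norm_cast; omega)
  exact lt_of_lt_of_le (by positivity) hpot

lemma log_card_div_le_pot :
    Real.log (Fintype.card (Fin m ⊕ Fin m)) / β ≤ ε / 4 * pot A wp wm β π := by
  have hlog : Real.log (2 * m) ≤ Real.log (4 * m) :=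
    Real.log_le_log (by norm_cast; omega) (by norm_cast; omega)
  rw [card_sum_fin, div_le_iff₀ hβ]
  rw [div_le_iff₀ (by positivity)] at hpot
  linarith

lemma qnorm_pos (hε' : ε ≤ 1 / 2) : 0 < qnorm (Rstar wp wm (Aᵀ *ᵥ π)) := by
  have : Nonempty (Fin m) := ⟨⟨0, hm⟩⟩
  have hφQ : pot A wp wm β π ≤ qnorm (Rstar wp wm (Aᵀ *ᵥ π)) +
      Real.log (Fintype.card (Fin m ⊕ Fin m)) / β := lse_le_qnorm_add hβ
  have hL := log_card_div_le_pot A wp wm hm hε hβ hpot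
  calc 0 < (1 - ε / 4) * pot A wp wm β π :=
        mul_pos (by linarith) (pot_pos A wp wm hm hε hβ hpot)
    _ ≤ qnorm (Rstar wp wm (Aᵀ *ᵥ π)) := by linarith

lemma one_sub_mul_qnorm_le_dotProduct_gradPot (hε' : ε ≤ 1 / 2) :
    (1 - ε / 4) * qnorm (Rstar wp wm (Aᵀ *ᵥ π)) ≤ π ⬝ᵥ gradPot A wp wm β π := by
  have : Nonempty (Fin m) := ⟨⟨0, hm⟩⟩
  have hQφ : qnorm (Rstar wp wm (Aᵀ *ᵥ π)) ≤ pot A wp wm β π :=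
    qnorm_le_lse hβ (pot_pos A wp wm hm hε hβ hpot).le
  have hφG : pot A wp wm β π ≤ π ⬝ᵥ gradPot A wp wm β π +
      Real.log (Fintype.card (Fin m ⊕ Fin m)) / β := by
    rw [dotProduct_gradPot]; exact lse_le_gradLse_dotProduct_add hβ
  have hL := log_card_div_le_pot A wp wm hm hε hβ hpot
  calc (1 - ε / 4) * qnorm (Rstar wp wm (Aᵀ *ᵥ π)) ≤ (1 - ε / 4) * pot A wp wm β π :=
        mul_le_mul_of_nonneg_left hQφ (by linarith)
    _ ≤ π ⬝ᵥ gradPot A wp wm β π := by linarith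

end Potential

section Estimate

variable {n m : ℕ} (A : Matrix (Fin n) (Fin m) ℝ) {wp wm : Fin m → ℝ} {β : ℝ} [Nonempty (Fin m)]
  (hwm : ∀ e, 0 < wm e) (hwp : ∀ e, wm e ≤ wp e)
include hwm hwp

lemma abs_dotProduct_mul_le_one_add_abs {b h : Fin n → ℝ} (π : Fin n → ℝ)
    (hh : ∀ e, |(Aᵀ *ᵥ h) e| ≤ wm e) (hG : 0 ≤ π ⬝ᵥ gradPot A wp wm β π) :
    |b ⬝ᵥ h| * (π ⬝ᵥ gradPot A wp wm β π) ≤ 1 + |projGradPot A wp wm β b π ⬝ᵥ h| := by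
  set X := gradLse β (Rstar wp wm (Aᵀ *ᵥ π)) ⬝ᵥ Rstar wp wm (Aᵀ *ᵥ h)
  have hX : |X| ≤ 1 := abs_gradLse_dotProduct_le _ (abs_Rstar_le_one hwm hwp hh)
  have ht : projGradPot A wp wm β b π ⬝ᵥ h = X - (b ⬝ᵥ h) * (π ⬝ᵥ gradPot A wp wm β π) := by
    rw [projGradPot, sub_dotProduct, smul_dotProduct, smul_eq_mul, dotProduct_comm _ h,
      dotProduct_gradPot, mul_comm]
  rw [ht]
  calc |b ⬝ᵥ h| * (π ⬝ᵥ gradPot A wp wm β π) = |b ⬝ᵥ h * (π ⬝ᵥ gradPot A wp wm β π)| := by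
        rw [abs_mul, abs_of_nonneg hG]
    _ = |X - (X - b ⬝ᵥ h * (π ⬝ᵥ gradPot A wp wm β π))| := by rw [sub_sub_cancel]
    _ ≤ |X| + |X - b ⬝ᵥ h * (π ⬝ᵥ gradPot A wp wm β π)| := abs_sub _ _
    _ ≤ 1 + |X - b ⬝ᵥ h * (π ⬝ᵥ gradPot A wp wm β π)| := by linarith

lemma lam_mul_dotProduct_projGradPot_le {lam : ℝ} (hlam : ∀ e, wp e / wm e ≤ lam) {α ε : ℝ}
    (hα : 1 ≤ α) (hε : ε ≤ 1 / 2) {b π h : Fin n → ℝ}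
    (hh : infnorm (fun e => (Aᵀ *ᵥ h) e / wm e) ≤ 1)
    (hQG : (1 - ε / 4) * qnorm (Rstar wp wm (Aᵀ *ᵥ π)) ≤ π ⬝ᵥ gradPot A wp wm β π)
    (ht : 0 ≤ projGradPot A wp wm β b π ⬝ᵥ h)
    (hN : 0 < infnorm (Rstar wp wm (Aᵀ *ᵥ (h - (b ⬝ᵥ h) • π))))
    (hδ : projGradPot A wp wm β b π ⬝ᵥ h / infnorm (Rstar wp wm (Aᵀ *ᵥ (h - (b ⬝ᵥ h) • π)))
      ≤ ε / (8 * α * lam ^ 2)) :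
    lam * (α * (projGradPot A wp wm β b π ⬝ᵥ h)) ≤ 7 / 24 * ε := by
  obtain ⟨e⟩ := ‹Nonempty (Fin m)›
  have hlam1 : 1 ≤ lam := ((one_le_div (hwm e)).2 (hwp e)).trans (hlam e)
  have hh' : ∀ e, |(Aᵀ *ᵥ h) e| ≤ wm e := fun e => by
    have := (abs_le_infnorm _ e).trans hh
    rwa [abs_div, abs_of_pos (hwm e), div_le_one (hwm e)] at this
  have hNb := infnorm_Rstar_sub_smul_le hwm hwp hlam hh' (b ⬝ᵥ h) (w := Aᵀ *ᵥ π)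
  rw [← mulVec_smul, ← mulVec_sub] at hNb
  set Q := qnorm (Rstar wp wm (Aᵀ *ᵥ π))
  set t := projGradPot A wp wm β b π ⬝ᵥ h
  have hQ : 0 ≤ Q := qnorm_nonneg _
  have hQG' : 7 / 8 * Q ≤ π ⬝ᵥ gradPot A wp wm β π := by
    nlinarith [mul_le_mul_of_nonneg_right hε hQ]
  have hcG := abs_dotProduct_mul_le_one_add_abs A hwm hwp (b := b) π hh' (by linarith)
  rw [abs_of_nonneg ht] at hcG
  have hcQ : |b ⬝ᵥ h| * Q ≤ 8 / 7 * (1 + t) := by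
    nlinarith [mul_le_mul_of_nonneg_left hQG' (abs_nonneg (b ⬝ᵥ h))]
  refine mul_mul_le_of_self_referential_bound hlam1 hα hε ht hN ?_ hδ
  nlinarith [mul_le_mul_of_nonneg_left hcQ (zero_le_one.trans hlam1)]

end Estimate

theorem gradient_descent_correctness_general {n m : ℕ} (hm : 1 ≤ m)
    (A : Matrix (Fin n) (Fin m) ℝ) (wp wm : Fin m → ℝ)
    (hw : ∀ e, 0 < wm e ∧ wm e ≤ wp e)
    (lam : ℝ) (hlam : lam = ⨆ e : Fin m, wp e / wm e)
    (ε α β : ℝ) (hε : 0 < ε) (hε' : ε ≤ 1 / 2) (hα : 1 ≤ α) (hβ : 0 < β)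
    (b π : Fin n → ℝ) (hbπ : b ⬝ᵥ π = 1)
    (hpot : 4 * Real.log (4 * (m : ℝ)) / (ε * β) ≤ pot A wp wm β π)
    -- `b̃ = Pᵀ∇φ_β(π)` where `P = I − πbᵀ`
    (btilde : Fin n → ℝ)
    (hbtilde : btilde = fun i =>
      gradPot A wp wm β π i - b i * (π ⬝ᵥ gradPot A wp wm β π))
    (htilde : Fin n → ℝ)
    (hhfeas : infnorm (fun e => (Aᵀ *ᵥ htilde) e / wm e) ≤ 1)
    -- `Ph̃` where `P = I − πbᵀ`
    (Ph : Fin n → ℝ) (hPh : Ph = fun i => htilde i - π i * (b ⬝ᵥ htilde))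
    (hNpos : 0 < infnorm (Rstar wp wm (Aᵀ *ᵥ Ph)))
    (δ : ℝ) (hδdef : δ = (btilde ⬝ᵥ htilde) / infnorm (Rstar wp wm (Aᵀ *ᵥ Ph)))
    (hδ : δ ≤ ε / (8 * α * lam ^ 2))
    (x₁ : Fin m → ℝ) (hx₁ : A *ᵥ x₁ = gradPot A wp wm β π)
    (hx₁p : pnorm (Wstar wp wm x₁) ≤ 1 + ε / 8)
    (x₂ : Fin m → ℝ) (hx₂ : A *ᵥ x₂ = btilde)
    (hx₂n : onenorm (fun e => wm e * x₂ e) ≤ α * (btilde ⬝ᵥ htilde))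
    (x : Fin m → ℝ) (hx : x = fun e => (x₁ e - x₂ e) / (π ⬝ᵥ gradPot A wp wm β π))
    (y : Fin n → ℝ) (hy : y = fun i => π i / qnorm (Rstar wp wm (Aᵀ *ᵥ π))) :
    0 < π ⬝ᵥ gradPot A wp wm β π ∧
    0 < qnorm (Rstar wp wm (Aᵀ *ᵥ π)) ∧
    A *ᵥ x = b ∧
    qnorm (Rstar wp wm (Aᵀ *ᵥ y)) ≤ 1 ∧
    pnorm (Wstar wp wm x) ≤ (1 + ε) * (b ⬝ᵥ y) := by
  have : Nonempty (Fin m) := ⟨⟨0, hm⟩⟩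
  obtain ⟨hwm, hwp⟩ := forall_and.1 hw
  have hlam' : ∀ e, wp e / wm e ≤ lam := fun e =>
    hlam ▸ le_ciSup (f := fun e => wp e / wm e) (Set.finite_range _).bddAbove e
  have hlam1 : 1 ≤ lam := ((one_le_div (hwm ⟨0, hm⟩)).2 (hwp _)).trans (hlam' _)
  have hQ := qnorm_pos A wp wm hm hε hβ hpot hε'
  have hQG := one_sub_mul_qnorm_le_dotProduct_gradPot A wp wm hm hε hβ hpot hε'
  have hG : 0 < π ⬝ᵥ gradPot A wp wm β π := (mul_pos (by linarith) hQ).trans_le hQG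
  obtain rfl : btilde = projGradPot A wp wm β b π := by
    rw [hbtilde]; ext i; simp [projGradPot, mul_comm]
  obtain rfl : Ph = htilde - (b ⬝ᵥ htilde) • π := by
    rw [hPh]; ext i; simp [mul_comm]
  subst hδdef
  have ht0 := nonneg_of_mul_nonneg_right ((onenorm_nonneg _).trans hx₂n) (by linarith)
  have hkey := lam_mul_dotProduct_projGradPot_le A hwm hwp hlam' hα hε' hhfeas hQG ht0 hNpos hδ
  obtain rfl : x = (π ⬝ᵥ gradPot A wp wm β π)⁻¹ • (x₁ - x₂) := by
    rw [hx]; ext e; exact div_eq_inv_mul _ _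
  obtain rfl : y = (qnorm (Rstar wp wm (Aᵀ *ᵥ π)))⁻¹ • π := by
    rw [hy]; ext i; exact div_eq_inv_mul _ _
  refine ⟨hG, hQ, ?_, ?_, ?_⟩
  · rw [mulVec_smul, mulVec_sub, hx₁, hx₂, projGradPot, sub_sub_cancel, inv_smul_smul₀ hG.ne']
  · rw [mulVec_smul, Rstar_smul]
    exact qnorm_inv_qnorm_smul_le_one _
  · calc pnorm (Wstar wp wm _) = pnorm (Wstar wp wm (x₁ - x₂)) / π ⬝ᵥ gradPot A wp wm β π := by
          rw [Wstar_smul, pnorm_smul (inv_nonneg.2 hG.le), inv_mul_eq_div]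
      _ ≤ (1 + 5 / 12 * ε) / π ⬝ᵥ gradPot A wp wm β π := by
          gcongr
          linarith [pnorm_Wstar_sub_le hwm hwp hlam' x₁ x₂,
            mul_le_mul_of_nonneg_left hx₂n (zero_le_one.trans hlam1)]
      _ ≤ (1 + ε) / qnorm (Rstar wp wm (Aᵀ *ᵥ π)) := one_add_div_le_one_add_div hε hε' hQ hQG
      _ = (1 + ε) * (b ⬝ᵥ _) := by rw [dotProduct_smul, hbπ, smul_eq_mul, mul_one, div_eq_mul_inv]

/-- Correctness of the gradient descent output (Lemma 1.2). -/
theorem gradient_descent_correctness {n m : ℕ} (hn : 1 ≤ n) (hm : 1 ≤ m)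
    (A : Matrix (Fin n) (Fin m) ℝ) (wp wm : Fin m → ℝ)
    (hw : ∀ e, 0 < wm e ∧ wm e ≤ wp e)
    (lam : ℝ) (hlam : lam = ⨆ e : Fin m, wp e / wm e)
    (ε α β : ℝ) (hε : 0 < ε) (hε' : ε ≤ 1 / 2) (hα : 1 ≤ α) (hβ : 0 < β)
    (b π : Fin n → ℝ) (hbπ : b ⬝ᵥ π = 1)
    (hpot : 4 * Real.log (4 * (m : ℝ)) / (ε * β) ≤ pot A wp wm β π)
    -- `b̃ = Pᵀ∇φ_β(π)` where `P = I − πbᵀ`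
    (btilde : Fin n → ℝ)
    (hbtilde : btilde = fun i =>
      gradPot A wp wm β π i - b i * (π ⬝ᵥ gradPot A wp wm β π))
    (htilde : Fin n → ℝ)
    (hhfeas : infnorm (fun e => (Aᵀ *ᵥ htilde) e / wm e) ≤ 1)
    -- `Ph̃` where `P = I − πbᵀ`
    (Ph : Fin n → ℝ) (hPh : Ph = fun i => htilde i - π i * (b ⬝ᵥ htilde))
    (hNpos : 0 < infnorm (Rstar wp wm (Aᵀ *ᵥ Ph)))
    (δ : ℝ) (hδdef : δ = (btilde ⬝ᵥ htilde) / infnorm (Rstar wp wm (Aᵀ *ᵥ Ph)))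
    (hδ : δ ≤ ε / (8 * α * lam ^ 2))
    (x₁ : Fin m → ℝ) (hx₁ : A *ᵥ x₁ = gradPot A wp wm β π)
    (hx₁p : pnorm (Wstar wp wm x₁) ≤ 1 + ε / 8)
    (x₂ : Fin m → ℝ) (hx₂ : A *ᵥ x₂ = btilde)
    (hx₂n : onenorm (fun e => wm e * x₂ e) ≤ α * (btilde ⬝ᵥ htilde))
    (x : Fin m → ℝ) (hx : x = fun e => (x₁ e - x₂ e) / (π ⬝ᵥ gradPot A wp wm β π))
    (y : Fin n → ℝ) (hy : y = fun i => π i / qnorm (Rstar wp wm (Aᵀ *ᵥ π))) :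
    0 < π ⬝ᵥ gradPot A wp wm β π ∧
    0 < qnorm (Rstar wp wm (Aᵀ *ᵥ π)) ∧
    A *ᵥ x = b ∧
    qnorm (Rstar wp wm (Aᵀ *ᵥ y)) ≤ 1 ∧
    pnorm (Wstar wp wm x) ≤ (1 + ε) * (b ⬝ᵥ y) :=
  gradient_descent_correctness_general hm A wp wm hw lam hlam ε α β hε hε' hα hβ b π hbπ hpot btilde
    hbtilde htilde hhfeas Ph hPh hNpos δ hδdef hδ x₁ hx₁ hx₁p x₂ hx₂ hx₂n x hx y hy
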